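/- If {φᵢ≤ψᵢ}_{i∈I} = Preprocess(φ≤ψ) is obtained by exhaustive application of the Stage 1 rules of ALBA↓_Restricted (distribution, splitting, and monotone/antitone variable-elimination rules) to an ε-skeletal Sahlqvist inequality φ≤ψ, then each φᵢ≤ψᵢ is a definite ε-skeletal Sahlqvist inequality, i.e., it is ε-skeletal Sahlqvist and no +∨ or −∧ node occurs on any ε-critical branch of +φᵢ or −ψᵢ. -/

import Mathlib

namespace Hybrid

/-- Formulas of the hybrid language `L(@,↓)`:
propositional variables, state variables, nominals, ⊥, ⊤, ¬, ∨, ∧, →, ◇, □,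
satisfaction operators `@_x`, `@_i`, and the downarrow binder `↓x.φ`. -/
inductive Form : Type
  | prop : ℕ → Form
  | svar : ℕ → Form
  | nom  : ℕ → Form
  | bot  : Form
  | top  : Form
  | neg  : Form → Form
  | or   : Form → Form → Form
  | and  : Form → Form → Form
  | impl : Form → Form → Form
  | dia  : Form → Form
  | box  : Form → Form
  | atSvar : ℕ → Form → Form
  | atNom  : ℕ → Form → Form
  | bind : ℕ → Form → Form
  deriving DecidableEq

def Form.iff (φ ψ : Form) : Form := .and (.impl φ ψ) (.impl ψ φ)

/-- Terms: nominals or state variables. -/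
inductive Trm : Type
  | nom : ℕ → Trm
  | svar : ℕ → Trm
  deriving DecidableEq

def Trm.toForm : Trm → Form
  | .nom i => .nom i
  | .svar x => .svar x

/-- `@_t φ` for a term `t`. -/
def Trm.at : Trm → Form → Form
  | .nom i, φ => .atNom i φ
  | .svar x, φ => .atSvar x φ

/-! ### Syntactic notions -/

/-- Propositional variables occurring in a formula. -/
def props : Form → Finset ℕ
  | .prop p => {p}
  | .svar _ => ∅
  | .nom _ => ∅
  | .bot => ∅
  | .top => ∅
  | .neg φ => props φ
  | .or α β => props α ∪ props β
  | .and α β => props α ∪ props β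
  | .impl α β => props α ∪ props β
  | .dia φ => props φ
  | .box φ => props φ
  | .atSvar _ φ => props φ
  | .atNom _ φ => props φ
  | .bind _ φ => props φ

/-- Nominals occurring in a formula. -/
def noms : Form → Finset ℕ
  | .prop _ => ∅
  | .svar _ => ∅
  | .nom i => {i}
  | .bot => ∅
  | .top => ∅
  | .neg φ => noms φ
  | .or α β => noms α ∪ noms β
  | .and α β => noms α ∪ noms β
  | .impl α β => noms α ∪ noms β
  | .dia φ => noms φ
  | .box φ => noms φ
  | .atSvar _ φ => noms φ
  | .atNom i φ => insert i (noms φ)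
  | .bind _ φ => noms φ

/-- Free state variables of a formula. -/
def freeSvars : Form → Finset ℕ
  | .prop _ => ∅
  | .svar x => {x}
  | .nom _ => ∅
  | .bot => ∅
  | .top => ∅
  | .neg φ => freeSvars φ
  | .or α β => freeSvars α ∪ freeSvars β
  | .and α β => freeSvars α ∪ freeSvars β
  | .impl α β => freeSvars α ∪ freeSvars β
  | .dia φ => freeSvars φ
  | .box φ => freeSvars φ
  | .atSvar x φ => insert x (freeSvars φ)
  | .atNom _ φ => freeSvars φ
  | .bind x φ => (freeSvars φ).erase x

/-- All state variables (free or bound) occurring in a formula. -/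
def allSvars : Form → Finset ℕ
  | .prop _ => ∅
  | .svar x => {x}
  | .nom _ => ∅
  | .bot => ∅
  | .top => ∅
  | .neg φ => allSvars φ
  | .or α β => allSvars α ∪ allSvars β
  | .and α β => allSvars α ∪ allSvars β
  | .impl α β => allSvars α ∪ allSvars β
  | .dia φ => allSvars φ
  | .box φ => allSvars φ
  | .atSvar x φ => insert x (allSvars φ)
  | .atNom _ φ => allSvars φ
  | .bind x φ => insert x (allSvars φ)

/-- Substitution of a term `t` for all free occurrences of the state variable `x`. -/
def substSvar (x : ℕ) (t : Trm) : Form → Form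
  | .prop p => .prop p
  | .svar y => if y = x then t.toForm else .svar y
  | .nom i => .nom i
  | .bot => .bot
  | .top => .top
  | .neg φ => .neg (substSvar x t φ)
  | .or α β => .or (substSvar x t α) (substSvar x t β)
  | .and α β => .and (substSvar x t α) (substSvar x t β)
  | .impl α β => .impl (substSvar x t α) (substSvar x t β)
  | .dia φ => .dia (substSvar x t φ)
  | .box φ => .box (substSvar x t φ)
  | .atSvar y φ => if y = x then t.at (substSvar x t φ) else .atSvar y (substSvar x t φ)
  | .atNom i φ => .atNom i (substSvar x t φ)
  | .bind y φ => if y = x then .bind y φ else .bind y (substSvar x t φ)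

/-- `φ[i/x]`: substitution of the nominal `i` for all free occurrences of `x`. -/
def substSvarNom (x i : ℕ) (φ : Form) : Form := substSvar x (.nom i) φ

/-- Uniform substitution of a formula `θ` for the propositional variable `p`. -/
def substProp (p : ℕ) (θ : Form) : Form → Form
  | .prop q => if q = p then θ else .prop q
  | .svar x => .svar x
  | .nom i => .nom i
  | .bot => .bot
  | .top => .top
  | .neg φ => .neg (substProp p θ φ)
  | .or α β => .or (substProp p θ α) (substProp p θ β)
  | .and α β => .and (substProp p θ α) (substProp p θ β)
  | .impl α β => .impl (substProp p θ α) (substProp p θ β)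
  | .dia φ => .dia (substProp p θ φ)
  | .box φ => .box (substProp p θ φ)
  | .atSvar x φ => .atSvar x (substProp p θ φ)
  | .atNom i φ => .atNom i (substProp p θ φ)
  | .bind x φ => .bind x (substProp p θ φ)

/-- A substitution: uniformly replaces propositional variables by formulas
and terms (nominals or state variables) by terms. -/
structure Subst : Type where
  sp : ℕ → Form
  st : Trm → Trm

/-- Under a binder `↓x`, the bound variable `x` is not substituted. -/
def Subst.bindUpd (σ : Subst) (x : ℕ) : Subst :=
  ⟨σ.sp, fun t => if t = .svar x then .svar x else σ.st t⟩

/-- Application of a substitution to a formula. -/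
def Subst.app : Subst → Form → Form
  | σ, .prop p => σ.sp p
  | σ, .svar x => (σ.st (.svar x)).toForm
  | σ, .nom i => (σ.st (.nom i)).toForm
  | _, .bot => .bot
  | _, .top => .top
  | σ, .neg φ => .neg (σ.app φ)
  | σ, .or α β => .or (σ.app α) (σ.app β)
  | σ, .and α β => .and (σ.app α) (σ.app β)
  | σ, .impl α β => .impl (σ.app α) (σ.app β)
  | σ, .dia φ => .dia (σ.app φ)
  | σ, .box φ => .box (σ.app φ)
  | σ, .atSvar x φ => (σ.st (.svar x)).at (σ.app φ)
  | σ, .atNom i φ => (σ.st (.nom i)).at (σ.app φ)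
  | σ, .bind x φ => .bind x ((σ.bindUpd x).app φ)

/-- A substitution is safe for `φ` if it does not make free occurrences of state
variables to be substituted into the scope of a binder for them (no capture). -/
def SafeFor : Subst → Form → Prop
  | _, .prop _ => True
  | _, .svar _ => True
  | _, .nom _ => True
  | _, .bot => True
  | _, .top => True
  | σ, .neg φ => SafeFor σ φ
  | σ, .or α β => SafeFor σ α ∧ SafeFor σ β
  | σ, .and α β => SafeFor σ α ∧ SafeFor σ β
  | σ, .impl α β => SafeFor σ α ∧ SafeFor σ β
  | σ, .dia φ => SafeFor σ φ
  | σ, .box φ => SafeFor σ φ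
  | σ, .atSvar _ φ => SafeFor σ φ
  | σ, .atNom _ φ => SafeFor σ φ
  | σ, .bind x φ =>
      SafeFor (σ.bindUpd x) φ ∧
      (∀ p ∈ props φ, x ∉ freeSvars (σ.sp p)) ∧
      (∀ y ∈ freeSvars φ, y ≠ x → σ.st (.svar y) ≠ .svar x) ∧
      (∀ i ∈ noms φ, σ.st (.nom i) ≠ .svar x)

/-! ### Semantics -/

/-- A Kripke model: a nonempty domain, an accessibility relation, a valuation for
propositional variables, and a valuation assigning to each nominal the unique
world it denotes (i.e. a singleton valuation). -/
structure Model : Type 1 where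
  W : Type
  nonempty : Nonempty W
  R : W → W → Prop
  Vp : ℕ → W → Prop
  Vn : ℕ → W

/-- The satisfaction relation `M, g, w ⊩ φ`. -/
def sat (M : Model) : (ℕ → M.W) → M.W → Form → Prop
  | _, w, .prop p => M.Vp p w
  | g, w, .svar x => g x = w
  | _, w, .nom i => M.Vn i = w
  | _, _, .bot => False
  | _, _, .top => True
  | g, w, .neg φ => ¬ sat M g w φ
  | g, w, .or α β => sat M g w α ∨ sat M g w β
  | g, w, .and α β => sat M g w α ∧ sat M g w β
  | g, w, .impl α β => sat M g w α → sat M g w β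
  | g, w, .dia φ => ∃ v, M.R w v ∧ sat M g v φ
  | g, w, .box φ => ∀ v, M.R w v → sat M g v φ
  | g, _, .atSvar x φ => sat M g (g x) φ
  | g, _, .atNom i φ => sat M g (M.Vn i) φ
  | g, w, .bind x φ => sat M (fun y => if y = x then w else g y) w φ

/-- Global truth of a formula in a model with an assignment. -/
def globTrue (M : Model) (g : ℕ → M.W) (φ : Form) : Prop := ∀ w, sat M g w φ

/-- A Kripke frame. -/
structure Frame : Type 1 where
  W : Type
  nonempty : Nonempty W
  R : W → W → Prop

def Frame.toModel (F : Frame) (Vp : ℕ → F.W → Prop) (Vn : ℕ → F.W) : Model :=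
  ⟨F.W, F.nonempty, F.R, Vp, Vn⟩

/-- Validity of a formula on a frame: global truth under every valuation and assignment. -/
def Frame.valid (F : Frame) (φ : Form) : Prop :=
  ∀ (Vp : ℕ → F.W → Prop) (Vn : ℕ → F.W) (g : ℕ → F.W) (w : F.W),
    sat (F.toModel Vp Vn) g w φ

/-- The class of frames defined by a set of formulas. -/
def framesOf (Ax : Set Form) : Set Frame := {F | ∀ χ ∈ Ax, F.valid χ}

/-- Semantic consequence over a class of frames:
`Γ ⊩_𝓕 φ` iff at every pointed model based on a frame in `𝓕` where all of `Γ`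
holds, `φ` holds. -/
def FrameConseq (𝓕 : Set Frame) (Γ : Set Form) (φ : Form) : Prop :=
  ∀ F ∈ 𝓕, ∀ (Vp : ℕ → F.W → Prop) (Vn : ℕ → F.W) (g : ℕ → F.W) (w : F.W),
    (∀ γ ∈ Γ, sat (F.toModel Vp Vn) g w γ) → sat (F.toModel Vp Vn) g w φ

/-! ### The Hilbert system -/

/-- Classical tautologies: formulas true under every assignment of truth values
to formulas that respects the boolean connectives. -/
def IsTaut (φ : Form) : Prop :=
  ∀ v : Form → Prop,
    (v .bot ↔ False) →
    (v .top ↔ True) →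
    (∀ ψ, v (.neg ψ) ↔ ¬ v ψ) →
    (∀ ψ χ, v (.or ψ χ) ↔ v ψ ∨ v χ) →
    (∀ ψ χ, v (.and ψ χ) ↔ v ψ ∧ v χ) →
    (∀ ψ χ, v (.impl ψ χ) ↔ (v ψ → v χ)) →
    v φ

/-- The Hilbert system `K_{H(@,↓)} + Ax`. -/
inductive Prov (Ax : Set Form) : Form → Prop
  | ax {φ} : φ ∈ Ax → Prov Ax φ
  | taut {φ} : IsTaut φ → Prov Ax φ
  | dual (φ : Form) : Prov Ax (Form.iff (.dia φ) (.neg (.box (.neg φ))))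
  | k (φ ψ : Form) : Prov Ax (.impl (.box (.impl φ ψ)) (.impl (.box φ) (.box ψ)))
  | kAt (i : ℕ) (φ ψ : Form) :
      Prov Ax (.impl (.atNom i (.impl φ ψ)) (.impl (.atNom i φ) (.atNom i ψ)))
  | selfdual (i : ℕ) (φ : Form) :
      Prov Ax (Form.iff (.neg (.atNom i φ)) (.atNom i (.neg φ)))
  | ref (i : ℕ) : Prov Ax (.atNom i (.nom i))
  | intro (i : ℕ) (φ : Form) : Prov Ax (.impl (.and (.nom i) φ) (.atNom i φ))
  | back (i : ℕ) (φ : Form) : Prov Ax (.impl (.dia (.atNom i φ)) (.atNom i φ))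
  | agree (i j : ℕ) (φ : Form) :
      Prov Ax (.impl (.atNom i (.atNom j φ)) (.atNom j φ))
  | da (i x : ℕ) (φ : Form) :
      Prov Ax (.atNom i (Form.iff (.bind x φ) (substSvarNom x i φ)))
  | name (x : ℕ) (φ : Form) : x ∉ allSvars φ →
      Prov Ax (.impl (.bind x (.atSvar x φ)) φ)
  | bg (i x : ℕ) : Prov Ax (.atNom i (.box (.bind x (.atNom i (.dia (.svar x))))))
  | mp {φ ψ} : Prov Ax (.impl φ ψ) → Prov Ax φ → Prov Ax ψ
  | sb {φ} (σ : Subst) : SafeFor σ φ → Prov Ax φ → Prov Ax (σ.app φ)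
  | nec {φ} : Prov Ax φ → Prov Ax (.box φ)
  | necAt {φ} (i : ℕ) : Prov Ax φ → Prov Ax (.atNom i φ)
  | necBind {φ} (x : ℕ) : Prov Ax φ → Prov Ax (.bind x φ)

/-- Conjunction of a list of formulas. -/
def bigAnd : List Form → Form
  | [] => .top
  | [φ] => φ
  | φ :: rest => .and φ (bigAnd rest)

/-- `Γ ⊢_Ax φ`: there are `γ₁, …, γₙ ∈ Γ` with `⊢_Ax γ₁ ∧ … ∧ γₙ → φ`. -/
def SetProv (Ax : Set Form) (Γ : Set Form) (φ : Form) : Prop :=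
  ∃ L : List Form, (∀ γ ∈ L, γ ∈ Γ) ∧ Prov Ax (.impl (bigAnd L) φ)

/-! ### Inequalities, quasi-inequalities, translations -/

/-- An inequality `φ ≤ ψ`. -/
abbrev Ineq : Type := Form × Form

/-- `M, g ⊨ φ ≤ ψ`. -/
def ineqSat (M : Model) (g : ℕ → M.W) (I : Ineq) : Prop :=
  ∀ w, sat M g w I.1 → sat M g w I.2

/-- Inequalities of the special forms `i ≤ γ`, `x ≤ γ`, `γ ≤ ¬i`, `γ ≤ ¬x`. -/
inductive SIneq : Type
  | nomLe (i : ℕ) (γ : Form)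
  | svarLe (x : ℕ) (γ : Form)
  | leNegNom (γ : Form) (i : ℕ)
  | leNegSvar (γ : Form) (x : ℕ)
  deriving DecidableEq

def SIneq.toIneq : SIneq → Ineq
  | .nomLe i γ => (.nom i, γ)
  | .svarLe x γ => (.svar x, γ)
  | .leNegNom γ i => (γ, .neg (.nom i))
  | .leNegSvar γ x => (γ, .neg (.svar x))

/-- The translation of special inequalities into `L(@,↓)`-formulas. -/
def SIneq.tr : SIneq → Form
  | .nomLe i γ => .atNom i γ
  | .svarLe x γ => .atSvar x γ
  | .leNegNom γ i => .neg (.atNom i γ)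
  | .leNegSvar γ x => .neg (.atSvar x γ)

/-- A quasi-inequality `Ineq₁ & … & Ineqₙ ⇒ i ≤ ¬j`. -/
structure Quasi : Type where
  prem : List SIneq
  i : ℕ
  j : ℕ
  deriving DecidableEq

/-- `M, g ⊨ Quasi`. -/
def quasiSat (M : Model) (g : ℕ → M.W) (Q : Quasi) : Prop :=
  (∀ I ∈ Q.prem, ineqSat M g I.toIneq) →
    ineqSat M g ((.nom Q.i, .neg (.nom Q.j)) : Ineq)

/-- The translation of a quasi-inequality into an `L(@,↓)`-formula. -/
def Quasi.tr (Q : Quasi) : Form :=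
  .impl (bigAnd (Q.prem.map SIneq.tr)) (.neg (.atNom Q.i (.nom Q.j)))

/-- Validity of a quasi-inequality on a frame. -/
def Frame.validQuasi (F : Frame) (Q : Quasi) : Prop :=
  ∀ (Vp : ℕ → F.W → Prop) (Vn : ℕ → F.W) (g : ℕ → F.W),
    quasiSat (F.toModel Vp Vn) g Q

/-! ### Signed generation trees, polarity, skeletal Sahlqvist formulas -/

/-- `occSign p φ s` : the propositional variable `p` has an occurrence of sign `s`
in the positive generation tree `+φ` (`true` = positive, `false` = negative). -/
def occSign (p : ℕ) : Form → Bool → Prop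
  | .prop q, s => q = p ∧ s = true
  | .svar _, _ => False
  | .nom _, _ => False
  | .bot, _ => False
  | .top, _ => False
  | .neg φ, s => occSign p φ (!s)
  | .or α β, s => occSign p α s ∨ occSign p β s
  | .and α β, s => occSign p α s ∨ occSign p β s
  | .impl α β, s => occSign p α (!s) ∨ occSign p β s
  | .dia φ, s => occSign p φ s
  | .box φ, s => occSign p φ s
  | .atSvar _ φ, s => occSign p φ s
  | .atNom _ φ, s => occSign p φ s
  | .bind _ φ, s => occSign p φ s

/-- `p` is positive in `φ`: all occurrences of `p` in `+φ` are positive. -/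
def PosIn (p : ℕ) (φ : Form) : Prop := ¬ occSign p φ false

/-- `p` is negative in `φ`: all occurrences of `p` in `+φ` are negative. -/
def NegIn (p : ℕ) (φ : Form) : Prop := ¬ occSign p φ true

/-- `noCrit ε s φ` : the signed generation tree `(s, φ)` contains no ε-critical
leaf (a leaf `+p` with `ε p = 1` or `−p` with `ε p = ∂`; order-types are coded
as `ε : ℕ → Bool` with `true` = 1 and `false` = ∂). -/
def noCrit (ε : ℕ → Bool) : Bool → Form → Prop
  | s, .prop p => ε p ≠ s
  | _, .svar _ => True
  | _, .nom _ => True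
  | _, .bot => True
  | _, .top => True
  | s, .neg φ => noCrit ε (!s) φ
  | s, .or α β => noCrit ε s α ∧ noCrit ε s β
  | s, .and α β => noCrit ε s α ∧ noCrit ε s β
  | s, .impl α β => noCrit ε (!s) α ∧ noCrit ε s β
  | s, .dia φ => noCrit ε s φ
  | s, .box φ => noCrit ε s φ
  | s, .atSvar _ φ => noCrit ε s φ
  | s, .atNom _ φ => noCrit ε s φ
  | s, .bind _ φ => noCrit ε s φ

/-- `uniformSigned ε' s φ` : every propositional-variable leaf of the signed tree
`(s, φ)` is ε'-critical, i.e. the signed tree agrees with the order-type `ε'`. -/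
def uniformSigned (ε' : ℕ → Bool) : Bool → Form → Prop
  | s, .prop p => ε' p = s
  | _, .svar _ => True
  | _, .nom _ => True
  | _, .bot => True
  | _, .top => True
  | s, .neg φ => uniformSigned ε' (!s) φ
  | s, .or α β => uniformSigned ε' s α ∧ uniformSigned ε' s β
  | s, .and α β => uniformSigned ε' s α ∧ uniformSigned ε' s β
  | s, .impl α β => uniformSigned ε' (!s) α ∧ uniformSigned ε' s β
  | s, .dia φ => uniformSigned ε' s φ
  | s, .box φ => uniformSigned ε' s φ
  | s, .atSvar _ φ => uniformSigned ε' s φ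
  | s, .atNom _ φ => uniformSigned ε' s φ
  | s, .bind _ φ => uniformSigned ε' s φ

/-- `skelSahl ε s φ` : the signed generation tree `(s, φ)` is ε-skeletal
Sahlqvist, i.e. every ε-critical branch consists only of skeletal nodes
(skeletal: `+∨, +∧, +◇, +¬, +↓x, +@` and `−∧, −∨, −□, −¬, −↓x, −@, −→`). -/
def skelSahl (ε : ℕ → Bool) : Bool → Form → Prop
  | _, .prop _ => True
  | _, .svar _ => True
  | _, .nom _ => True
  | _, .bot => True
  | _, .top => True
  | s, .neg φ => skelSahl ε (!s) φ
  | s, .or α β => skelSahl ε s α ∧ skelSahl ε s β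
  | s, .and α β => skelSahl ε s α ∧ skelSahl ε s β
  | true, .impl α β => noCrit ε false α ∧ noCrit ε true β
  | false, .impl α β => skelSahl ε true α ∧ skelSahl ε false β
  | true, .dia φ => skelSahl ε true φ
  | false, .dia φ => noCrit ε false φ
  | true, .box φ => noCrit ε true φ
  | false, .box φ => skelSahl ε false φ
  | s, .atSvar _ φ => skelSahl ε s φ
  | s, .atNom _ φ => skelSahl ε s φ
  | s, .bind _ φ => skelSahl ε s φ

/-- `defSkelSahl ε s φ` : the signed generation tree `(s, φ)` is definite
ε-skeletal Sahlqvist: ε-skeletal Sahlqvist with no `+∨` or `−∧` node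
on any ε-critical branch. -/
def defSkelSahl (ε : ℕ → Bool) : Bool → Form → Prop
  | _, .prop _ => True
  | _, .svar _ => True
  | _, .nom _ => True
  | _, .bot => True
  | _, .top => True
  | s, .neg φ => defSkelSahl ε (!s) φ
  | true, .or α β => noCrit ε true α ∧ noCrit ε true β
  | false, .or α β => defSkelSahl ε false α ∧ defSkelSahl ε false β
  | true, .and α β => defSkelSahl ε true α ∧ defSkelSahl ε true β
  | false, .and α β => noCrit ε false α ∧ noCrit ε false β
  | true, .impl α β => noCrit ε false α ∧ noCrit ε true β
  | false, .impl α β => defSkelSahl ε true α ∧ defSkelSahl ε false β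
  | true, .dia φ => defSkelSahl ε true φ
  | false, .dia φ => noCrit ε false φ
  | true, .box φ => noCrit ε true φ
  | false, .box φ => defSkelSahl ε false φ
  | s, .atSvar _ φ => defSkelSahl ε s φ
  | s, .atNom _ φ => defSkelSahl ε s φ
  | s, .bind _ φ => defSkelSahl ε s φ

/-- An inequality `φ ≤ ψ` is ε-skeletal Sahlqvist if `+φ` and `−ψ` are. -/
def SkelSahlIneq (ε : ℕ → Bool) (φ ψ : Form) : Prop :=
  skelSahl ε true φ ∧ skelSahl ε false ψ

/-- A formula `φ → ψ` is skeletal Sahlqvist if `φ ≤ ψ` is ε-skeletal Sahlqvist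
for some order-type ε. -/
def SkelSahlForm (φ ψ : Form) : Prop := ∃ ε : ℕ → Bool, SkelSahlIneq ε φ ψ

/-! ### Stage 1: distribution, splitting, variable elimination -/

/-- Signed rewriting by a single distribution rule: `Dist s φ φ'` rewrites the
signed generation tree `(s, φ)` at some node, pushing `+◇, +↓x, +@, −¬, +∧, −→`
over `+∨` and `−□, −↓x, −@, +¬, −∨, −→` over `−∧`. -/
inductive Dist : Bool → Form → Form → Prop
  -- distribution over +∨
  | diaOr {α β} : Dist true (.dia (.or α β)) (.or (.dia α) (.dia β))
  | bindOr {x α β} : Dist true (.bind x (.or α β)) (.or (.bind x α) (.bind x β))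
  | atNomOr {i α β} : Dist true (.atNom i (.or α β)) (.or (.atNom i α) (.atNom i β))
  | atSvarOr {x α β} : Dist true (.atSvar x (.or α β)) (.or (.atSvar x α) (.atSvar x β))
  | negOr {α β} : Dist false (.neg (.or α β)) (.and (.neg α) (.neg β))
  | andOrL {α β γ} : Dist true (.and (.or α β) γ) (.or (.and α γ) (.and β γ))
  | andOrR {α β γ} : Dist true (.and α (.or β γ)) (.or (.and α β) (.and α γ))
  | implOr {α β γ} : Dist false (.impl (.or α β) γ) (.and (.impl α γ) (.impl β γ))
  -- distribution over −∧
  | boxAnd {α β} : Dist false (.box (.and α β)) (.and (.box α) (.box β))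
  | bindAnd {x α β} : Dist false (.bind x (.and α β)) (.and (.bind x α) (.bind x β))
  | atNomAnd {i α β} : Dist false (.atNom i (.and α β)) (.and (.atNom i α) (.atNom i β))
  | atSvarAnd {x α β} : Dist false (.atSvar x (.and α β)) (.and (.atSvar x α) (.atSvar x β))
  | negAnd {α β} : Dist true (.neg (.and α β)) (.or (.neg α) (.neg β))
  | orAndL {α β γ} : Dist false (.or (.and α β) γ) (.and (.or α γ) (.or β γ))
  | orAndR {α β γ} : Dist false (.or α (.and β γ)) (.and (.or α β) (.or α γ))
  | implAnd {α β γ} : Dist false (.impl α (.and β γ)) (.and (.impl α β) (.impl α γ))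
  -- congruence: rewriting inside a signed context
  | congNeg {s φ φ'} : Dist (!s) φ φ' → Dist s (.neg φ) (.neg φ')
  | congOrL {s α α' β} : Dist s α α' → Dist s (.or α β) (.or α' β)
  | congOrR {s α β β'} : Dist s β β' → Dist s (.or α β) (.or α β')
  | congAndL {s α α' β} : Dist s α α' → Dist s (.and α β) (.and α' β)
  | congAndR {s α β β'} : Dist s β β' → Dist s (.and α β) (.and α β')
  | congImplL {s α α' β} : Dist (!s) α α' → Dist s (.impl α β) (.impl α' β)
  | congImplR {s α β β'} : Dist s β β' → Dist s (.impl α β) (.impl α β')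
  | congDia {s φ φ'} : Dist s φ φ' → Dist s (.dia φ) (.dia φ')
  | congBox {s φ φ'} : Dist s φ φ' → Dist s (.box φ) (.box φ')
  | congAtSvar {s x φ φ'} : Dist s φ φ' → Dist s (.atSvar x φ) (.atSvar x φ')
  | congAtNom {s i φ φ'} : Dist s φ φ' → Dist s (.atNom i φ) (.atNom i φ')
  | congBind {s x φ φ'} : Dist s φ φ' → Dist s (.bind x φ) (.bind x φ')

/-- A single Stage 1 (preprocessing) step on a finite set of inequalities. -/
inductive Stage1 : Finset Ineq → Finset Ineq → Prop
  | distL {φ φ' ψ : Form} {S : Finset Ineq} (h : Dist true φ φ') :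
      Stage1 (insert (φ, ψ) S) (insert (φ', ψ) S)
  | distR {φ ψ ψ' : Form} {S : Finset Ineq} (h : Dist false ψ ψ') :
      Stage1 (insert (φ, ψ) S) (insert (φ, ψ') S)
  | splitOr {α β γ : Form} {S : Finset Ineq} :
      Stage1 (insert (.or α β, γ) S) (insert (α, γ) (insert (β, γ) S))
  | splitAnd {α β γ : Form} {S : Finset Ineq} :
      Stage1 (insert (α, .and β γ) S) (insert (α, β) (insert (α, γ) S))
  | elimBot {p : ℕ} {α β : Form} {S : Finset Ineq}
      (hβ : PosIn p β) (hα : NegIn p α) :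
      Stage1 (insert (α, β) S) (insert (substProp p .bot α, substProp p .bot β) S)
  | elimTop {p : ℕ} {α β : Form} {S : Finset Ineq}
      (hβ : PosIn p β) (hα : NegIn p α) :
      Stage1 (insert (β, α) S) (insert (substProp p .top β, substProp p .top α) S)

/-- `Preprocess(φ ≤ ψ)`: the result of exhaustively applying the Stage 1 rules,
starting from `{φ ≤ ψ}`. -/
def PreprocessTo (φ ψ : Form) (P : Finset Ineq) : Prop :=
  Relation.ReflTransGen Stage1 {((φ, ψ) : Ineq)} P ∧ ∀ T, Stage1 P T → T = P

/-! ### Stage 2: reduction -/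

/-- Nominals occurring in a system of inequalities. -/
def sysNoms (S : Finset Ineq) : Finset ℕ := S.sup fun I => noms I.1 ∪ noms I.2

/-- A single step of Substage 1 of Stage 2 (splitting, approximation,
residuation rules), applied to an inequality still containing propositional
variables (these rules prepare the elimination of the propositional variables).
The nominals introduced by the approximation rules must not occur in the system
before the rule is applied. -/
inductive S2 : Finset Ineq → Finset Ineq → Prop
  | splitAnd {i : ℕ} {β γ : Form} {S : Finset Ineq} (hp : props β ∪ props γ ≠ ∅) :
      S2 (insert (.nom i, .and β γ) S) (insert ((Form.nom i : Form), β) (insert ((Form.nom i : Form), γ) S))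
  | splitOr {i : ℕ} {α β : Form} {S : Finset Ineq} (hp : props α ∪ props β ≠ ∅) :
      S2 (insert (.or α β, .neg (.nom i)) S)
         (insert (α, .neg (.nom i)) (insert (β, .neg (.nom i)) S))
  | apprDia {α : Form} {S : Finset Ineq} (t : Trm) (j : ℕ) (hp : props α ≠ ∅)
      (hfresh : j ∉ sysNoms (insert (t.toForm, .dia α) S)) :
      S2 (insert (t.toForm, .dia α) S)
         (insert (.nom j, α) (insert (t.toForm, .dia (.nom j)) S))
  | apprBox {α : Form} {S : Finset Ineq} (t : Trm) (j : ℕ) (hp : props α ≠ ∅)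
      (hfresh : j ∉ sysNoms (insert (.box α, .neg t.toForm) S)) :
      S2 (insert (.box α, .neg t.toForm) S)
         (insert (α, .neg (.nom j)) (insert (.box (.neg (.nom j)), .neg t.toForm) S))
  | apprAtNomL {α : Form} {S : Finset Ineq} (t : Trm) (j : ℕ) (hp : props α ≠ ∅) :
      S2 (insert (t.toForm, .atNom j α) S) (insert (.nom j, α) S)
  | apprAtNomR {α : Form} {S : Finset Ineq} (t : Trm) (j : ℕ) (hp : props α ≠ ∅) :
      S2 (insert (.atNom j α, .neg t.toForm) S) (insert (α, .neg (.nom j)) S)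
  | apprAtSvarL {α : Form} {S : Finset Ineq} (t : Trm) (x : ℕ) (hp : props α ≠ ∅) :
      S2 (insert (t.toForm, .atSvar x α) S) (insert (.svar x, α) S)
  | apprAtSvarR {α : Form} {S : Finset Ineq} (t : Trm) (x : ℕ) (hp : props α ≠ ∅) :
      S2 (insert (.atSvar x α, .neg t.toForm) S) (insert (α, .neg (.svar x)) S)
  | apprBindNomL {α : Form} {S : Finset Ineq} (i x : ℕ) (hp : props α ≠ ∅) :
      S2 (insert (.nom i, .bind x α) S) (insert ((Form.nom i : Form), substSvar x (.nom i) α) S)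
  | apprBindSvarL {α : Form} {S : Finset Ineq} (y x : ℕ) (hp : props α ≠ ∅) :
      S2 (insert (.svar y, .bind x α) S) (insert ((Form.svar y : Form), substSvar x (.svar y) α) S)
  | apprBindNomR {α : Form} {S : Finset Ineq} (i x : ℕ) (hp : props α ≠ ∅) :
      S2 (insert (.bind x α, .neg (.nom i)) S)
         (insert (substSvar x (.nom i) α, .neg (.nom i)) S)
  | apprBindSvarR {α : Form} {S : Finset Ineq} (y x : ℕ) (hp : props α ≠ ∅) :
      S2 (insert (.bind x α, .neg (.svar y)) S)
         (insert (substSvar x (.svar y) α, .neg (.svar y)) S)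
  | apprImpl {α β : Form} {S : Finset Ineq} (t : Trm) (j k : ℕ)
      (hp : props α ∪ props β ≠ ∅) (hjk : j ≠ k)
      (hfj : j ∉ sysNoms (insert (.impl α β, .neg t.toForm) S))
      (hfk : k ∉ sysNoms (insert (.impl α β, .neg t.toForm) S)) :
      S2 (insert (.impl α β, .neg t.toForm) S)
         (insert (.nom j, α) (insert (β, .neg (.nom k))
           (insert (.impl (.nom j) (.neg (.nom k)), .neg t.toForm) S)))
  | resL {α : Form} {S : Finset Ineq} (t : Trm) (hp : props α ≠ ∅) :
      S2 (insert (t.toForm, .neg α) S) (insert (α, .neg t.toForm) S)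
  | resR {α : Form} {S : Finset Ineq} (t : Trm) (hp : props α ≠ ∅) :
      S2 (insert (.neg α, .neg t.toForm) S) (insert (t.toForm, α) S)

/-- `i₁ ∨ … ∨ iₙ` (the minimal valuation). -/
def disjNoms : List ℕ → Form
  | [] => .bot
  | [i] => .nom i
  | i :: rest => .or (.nom i) (disjNoms rest)

/-- `¬i₁ ∧ … ∧ ¬iₙ` (the maximal valuation). -/
def conjNegNoms : List ℕ → Form
  | [] => .top
  | [i] => .neg (.nom i)
  | i :: rest => .and (.neg (.nom i)) (conjNegNoms rest)

/-- The Ackermann rules (Substage 2 of Stage 2), eliminating a propositional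
variable `p` from the whole system by substituting its minimal (resp. maximal)
valuation. -/
inductive Ack : Finset Ineq → Finset Ineq → Prop
  | right {p : ℕ} {l : List ℕ} {rest : Finset Ineq}
      (hshape : ∀ I ∈ rest,
        (∃ t : Trm, ∃ γ, I = (t.toForm, γ) ∧ NegIn p γ) ∨
        (∃ β, ∃ t : Trm, I = (β, .neg t.toForm) ∧ PosIn p β)) :
      Ack ((l.map fun i => ((Form.nom i, Form.prop p) : Ineq)).toFinset ∪ rest)
          (rest.image fun I => (substProp p (disjNoms l) I.1, substProp p (disjNoms l) I.2))
  | left {p : ℕ} {l : List ℕ} {rest : Finset Ineq}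
      (hshape : ∀ I ∈ rest,
        (∃ t : Trm, ∃ γ, I = (t.toForm, γ) ∧ PosIn p γ) ∨
        (∃ β, ∃ t : Trm, I = (β, .neg t.toForm) ∧ NegIn p β)) :
      Ack ((l.map fun i => ((Form.prop p, Form.neg (Form.nom i)) : Ineq)).toFinset ∪ rest)
          (rest.image fun I => (substProp p (conjNegNoms l) I.1, substProp p (conjNegNoms l) I.2))

/-- A Stage 2 step: a Substage 1 rule or an Ackermann rule. -/
def Stage2 (S T : Finset Ineq) : Prop := S2 S T ∨ Ack S T

/-- A successful Stage 2 run: reduce the system to pure inequalities. -/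
def Stage2To (S T : Finset Ineq) : Prop :=
  Relation.ReflTransGen Stage2 S T ∧ ∀ I ∈ T, props I.1 = ∅ ∧ props I.2 = ∅

/-! ### Stage 3: output -/

/-- Replacement of all free state variables by nominals via `ρ`
(`B` records the bound variables). -/
def svarsToNoms (ρ : ℕ → ℕ) (B : Finset ℕ) : Form → Form
  | .prop p => .prop p
  | .svar x => if x ∈ B then .svar x else .nom (ρ x)
  | .nom i => .nom i
  | .bot => .bot
  | .top => .top
  | .neg φ => .neg (svarsToNoms ρ B φ)
  | .or α β => .or (svarsToNoms ρ B α) (svarsToNoms ρ B β)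
  | .and α β => .and (svarsToNoms ρ B α) (svarsToNoms ρ B β)
  | .impl α β => .impl (svarsToNoms ρ B α) (svarsToNoms ρ B β)
  | .dia φ => .dia (svarsToNoms ρ B φ)
  | .box φ => .box (svarsToNoms ρ B φ)
  | .atSvar x φ => if x ∈ B then .atSvar x (svarsToNoms ρ B φ) else .atNom (ρ x) (svarsToNoms ρ B φ)
  | .atNom i φ => .atNom i (svarsToNoms ρ B φ)
  | .bind x φ => .bind x (svarsToNoms ρ (insert x B) φ)

def SIneq.mapSvars (ρ : ℕ → ℕ) : SIneq → SIneq
  | .nomLe i γ => .nomLe i (svarsToNoms ρ ∅ γ)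
  | .svarLe x γ => .nomLe (ρ x) (svarsToNoms ρ ∅ γ)
  | .leNegNom γ i => .leNegNom (svarsToNoms ρ ∅ γ) i
  | .leNegSvar γ x => .leNegNom (svarsToNoms ρ ∅ γ) (ρ x)

/-- The quasi-inequality produced by a successful run of Stages 2–3 from the
system `{i₀ ≤ θ, χ ≤ ¬i₁}` obtained by first approximation on `θ ≤ χ`
(with `i₀, i₁` fresh), with free state variables finally replaced by fresh
nominals. -/
def QuasiFor (I : Ineq) (Q : Quasi) : Prop :=
  ∃ i₀ i₁ : ℕ, i₀ ≠ i₁ ∧ i₀ ∉ noms I.1 ∪ noms I.2 ∧ i₁ ∉ noms I.1 ∪ noms I.2 ∧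
  ∃ T : Finset Ineq,
    Stage2To {((.nom i₀, I.1) : Ineq), (I.2, .neg (.nom i₁))} T ∧
    ∃ (L : List SIneq) (ρ : ℕ → ℕ),
      (L.map SIneq.toIneq).toFinset = T ∧
      Function.Injective ρ ∧
      (∀ x, ρ x ∉ sysNoms T) ∧ (∀ x, ρ x ≠ i₀ ∧ ρ x ≠ i₁) ∧
      Q = ⟨L.map (SIneq.mapSvars ρ), i₀, i₁⟩

/-- `ALBA↓_Restricted` runs successfully on the input `φ → ψ` and outputs the
set `out = Pure(φ → ψ)` of pure quasi-inequalities. -/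
def RunsTo (φ ψ : Form) (out : Finset Quasi) : Prop :=
  ∃ (P : Finset Ineq) (q : Ineq → Quasi),
    PreprocessTo φ ψ P ∧ (∀ I ∈ P, QuasiFor I (q I)) ∧ out = P.image q

/-- The six shapes of inequalities produced by Substage 1 of Stage 2
(Lemma on the shapes; forms (2)–(5) of the paper, with the pure form split
into its left- and right-handed versions). -/
def FiveForms (ε : ℕ → Bool) (I : Ineq) : Prop :=
  (∃ t : Trm, ∃ γ, I = (t.toForm, γ) ∧ props γ = ∅) ∨
  (∃ γ, ∃ t : Trm, I = (γ, .neg t.toForm) ∧ props γ = ∅) ∨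
  (∃ t : Trm, ∃ p, I = (t.toForm, .prop p) ∧ ε p = true) ∨
  (∃ p, ∃ t : Trm, I = (.prop p, .neg t.toForm) ∧ ε p = false) ∨
  (∃ t : Trm, ∃ δ, I = (t.toForm, δ) ∧ uniformSigned (fun q => !(ε q)) true δ) ∨
  (∃ δ, ∃ t : Trm, I = (δ, .neg t.toForm) ∧ uniformSigned (fun q => !(ε q)) false δ)

end Hybrid

namespace Hybrid

lemma dist_ne : ∀ {s : Bool} {φ φ' : Form}, Dist s φ φ' → φ ≠ φ' := by
  intro s φ φ' h
  induction h <;> simp_all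

lemma dist_preserves (ε : ℕ → Bool) {s : Bool} {φ φ' : Form} (h : Dist s φ φ') :
    (noCrit ε s φ → noCrit ε s φ') ∧ (skelSahl ε s φ → skelSahl ε s φ') := by
  induction h <;>
    first
      | (rename Bool => s'; cases s' <;> simp_all [noCrit, skelSahl] <;> tauto)
      | (simp_all [noCrit, skelSahl]; tauto)
      | simp_all [noCrit, skelSahl]
lemma substProp_preserves (ε : ℕ → Bool) (p : ℕ) (θ : Form)
    (hn : ∀ s, noCrit ε s θ) (hs : ∀ s, skelSahl ε s θ) :
    ∀ (χ : Form) (s : Bool),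
      (noCrit ε s χ → noCrit ε s (substProp p θ χ)) ∧
      (skelSahl ε s χ → skelSahl ε s (substProp p θ χ)) := by
  intro χ
  induction χ with
  | prop q =>
      intro s
      by_cases h : q = p <;> simp [substProp, h, noCrit, skelSahl, hn, hs]
  | neg φ ih => intro s; have := ih (!s); simp [substProp, noCrit, skelSahl]; tauto
  | or α β iha ihb =>
      intro s; have := iha s; have := ihb s
      simp [substProp, noCrit, skelSahl]; tauto
  | and α β iha ihb =>
      intro s; have := iha s; have := ihb s
      simp [substProp, noCrit, skelSahl]; tauto
  | impl α β iha ihb =>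
      intro s; have := iha (!s); have := ihb s
      cases s <;> simp_all [substProp, noCrit, skelSahl] <;> tauto
  | dia φ ih =>
      intro s; have := ih s
      cases s <;> simp_all [substProp, noCrit, skelSahl] <;> tauto
  | box φ ih =>
      intro s; have := ih s
      cases s <;> simp_all [substProp, noCrit, skelSahl] <;> tauto
  | atSvar x φ ih => intro s; have := ih s; simp [substProp, noCrit, skelSahl]; tauto
  | atNom i φ ih => intro s; have := ih s; simp [substProp, noCrit, skelSahl]; tauto
  | bind x φ ih => intro s; have := ih s; simp [substProp, noCrit, skelSahl]; tauto
  | _ => intro s; simp [substProp, noCrit, skelSahl]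
lemma or_ne_left (a b : Form) : Form.or a b ≠ a := by
  intro h; have := congrArg sizeOf h; simp at this; try omega

lemma or_ne_right (a b : Form) : Form.or a b ≠ b := by
  intro h; have := congrArg sizeOf h; simp at this; try omega

lemma and_ne_left (a b : Form) : Form.and a b ≠ a := by
  intro h; have := congrArg sizeOf h; simp at this; try omega

lemma and_ne_right (a b : Form) : Form.and a b ≠ b := by
  intro h; have := congrArg sizeOf h; simp at this; try omega

/-- Irreducible signed trees that are skeletal Sahlqvist are definite. -/
lemma skelSahl_def_of_nf (ε : ℕ → Bool) :
    ∀ (χ : Form) (s : Bool), skelSahl ε s χ → (∀ χ', ¬ Dist s χ χ') →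
      (s = true → ∀ a b, χ ≠ .or a b) → (s = false → ∀ a b, χ ≠ .and a b) →
      defSkelSahl ε s χ := by
  intro χ
  induction χ with
  | neg φ ih =>
      intro s h hnf _ _
      cases s with
      | true =>
          simp only [skelSahl] at h
          simp only [defSkelSahl]
          refine ih false h (fun χ' hd => hnf _ (Dist.congNeg hd)) (by simp) ?_
          rintro - a b rfl
          exact hnf _ Dist.negAnd
      | false =>
          simp only [skelSahl] at h
          simp only [defSkelSahl]
          refine ih true h (fun χ' hd => hnf _ (Dist.congNeg hd)) ?_ (by simp)
          rintro - a b rfl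
          exact hnf _ Dist.negOr
  | or α β iha ihb =>
      intro s h hnf hor _
      cases s with
      | true => exact absurd rfl ((hor rfl α β).elim ∘ fun h => h)
      | false =>
          simp only [skelSahl] at h
          simp only [defSkelSahl]
          constructor
          · refine iha false h.1 (fun χ' hd => hnf _ (Dist.congOrL hd)) (by simp) ?_
            rintro - a b rfl
            exact hnf _ Dist.orAndL
          · refine ihb false h.2 (fun χ' hd => hnf _ (Dist.congOrR hd)) (by simp) ?_
            rintro - a b rfl
            exact hnf _ Dist.orAndR
  | and α β iha ihb =>
      intro s h hnf _ hand
      cases s with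
      | false => exact absurd rfl ((hand rfl α β).elim ∘ fun h => h)
      | true =>
          simp only [skelSahl] at h
          simp only [defSkelSahl]
          constructor
          · refine iha true h.1 (fun χ' hd => hnf _ (Dist.congAndL hd)) ?_ (by simp)
            rintro - a b rfl
            exact hnf _ Dist.andOrL
          · refine ihb true h.2 (fun χ' hd => hnf _ (Dist.congAndR hd)) ?_ (by simp)
            rintro - a b rfl
            exact hnf _ Dist.andOrR
  | impl α β iha ihb =>
      intro s h hnf _ _
      cases s with
      | true => simpa only [defSkelSahl, skelSahl] using h
      | false =>
          simp only [skelSahl] at h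
          simp only [defSkelSahl]
          constructor
          · refine iha true h.1 (fun χ' hd => hnf _ (Dist.congImplL (s := false) hd)) ?_ (by simp)
            rintro - a b rfl
            exact hnf _ Dist.implOr
          · refine ihb false h.2 (fun χ' hd => hnf _ (Dist.congImplR hd)) (by simp) ?_
            rintro - a b rfl
            exact hnf _ Dist.implAnd
  | dia φ ih =>
      intro s h hnf _ _
      cases s with
      | true =>
          simp only [skelSahl] at h
          simp only [defSkelSahl]
          refine ih true h (fun χ' hd => hnf _ (Dist.congDia hd)) ?_ (by simp)
          rintro - a b rfl
          exact hnf _ Dist.diaOr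
      | false => simpa only [defSkelSahl, skelSahl] using h
  | box φ ih =>
      intro s h hnf _ _
      cases s with
      | true => simpa only [defSkelSahl, skelSahl] using h
      | false =>
          simp only [skelSahl] at h
          simp only [defSkelSahl]
          refine ih false h (fun χ' hd => hnf _ (Dist.congBox hd)) (by simp) ?_
          rintro - a b rfl
          exact hnf _ Dist.boxAnd
  | atSvar x φ ih =>
      intro s h hnf _ _
      simp only [skelSahl] at h
      simp only [defSkelSahl]
      refine ih s h (fun χ' hd => hnf _ (Dist.congAtSvar hd)) ?_ ?_
      · rintro rfl a b rfl
        exact hnf _ Dist.atSvarOr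
      · rintro rfl a b rfl
        exact hnf _ Dist.atSvarAnd
  | atNom i φ ih =>
      intro s h hnf _ _
      simp only [skelSahl] at h
      simp only [defSkelSahl]
      refine ih s h (fun χ' hd => hnf _ (Dist.congAtNom hd)) ?_ ?_
      · rintro rfl a b rfl
        exact hnf _ Dist.atNomOr
      · rintro rfl a b rfl
        exact hnf _ Dist.atNomAnd
  | bind x φ ih =>
      intro s h hnf _ _
      simp only [skelSahl] at h
      simp only [defSkelSahl]
      refine ih s h (fun χ' hd => hnf _ (Dist.congBind hd)) ?_ ?_
      · rintro rfl a b rfl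
        exact hnf _ Dist.bindOr
      · rintro rfl a b rfl
        exact hnf _ Dist.bindAnd
  | _ => intro s _ _ _ _ <;> cases s <;> simp [defSkelSahl]
lemma stage1_inv (ε : ℕ → Bool) {S T : Finset Ineq} (h : Stage1 S T)
    (hS : ∀ I ∈ S, skelSahl ε true I.1 ∧ skelSahl ε false I.2) :
    ∀ I ∈ T, skelSahl ε true I.1 ∧ skelSahl ε false I.2 := by
  cases h with
  | @distL φ φ' ψ S' hd =>
      intro I hI
      rcases Finset.mem_insert.mp hI with rfl | hI
      · have h0 := hS _ (Finset.mem_insert_self (φ, ψ) S')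
        exact ⟨(dist_preserves ε hd).2 h0.1, h0.2⟩
      · exact hS _ (Finset.mem_insert_of_mem hI)
  | @distR φ ψ ψ' S' hd =>
      intro I hI
      rcases Finset.mem_insert.mp hI with rfl | hI
      · have h0 := hS _ (Finset.mem_insert_self (φ, ψ) S')
        exact ⟨h0.1, (dist_preserves ε hd).2 h0.2⟩
      · exact hS _ (Finset.mem_insert_of_mem hI)
  | @splitOr α β γ S' =>
      intro I hI
      have h0 := hS _ (Finset.mem_insert_self (Form.or α β, γ) S')
      have h1 : skelSahl ε true α ∧ skelSahl ε true β := by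
        simpa [skelSahl] using h0.1
      rcases Finset.mem_insert.mp hI with rfl | hI
      · exact ⟨h1.1, h0.2⟩
      rcases Finset.mem_insert.mp hI with rfl | hI
      · exact ⟨h1.2, h0.2⟩
      · exact hS _ (Finset.mem_insert_of_mem hI)
  | @splitAnd α β γ S' =>
      intro I hI
      have h0 := hS _ (Finset.mem_insert_self (α, Form.and β γ) S')
      have h1 : skelSahl ε false β ∧ skelSahl ε false γ := by
        simpa [skelSahl] using h0.2
      rcases Finset.mem_insert.mp hI with rfl | hI
      · exact ⟨h0.1, h1.1⟩
      rcases Finset.mem_insert.mp hI with rfl | hI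
      · exact ⟨h0.1, h1.2⟩
      · exact hS _ (Finset.mem_insert_of_mem hI)
  | @elimBot p α β S' hβ hα =>
      intro I hI
      rcases Finset.mem_insert.mp hI with rfl | hI
      · have h0 := hS _ (Finset.mem_insert_self (α, β) S')
        have hn : ∀ s, noCrit ε s Form.bot := fun s => by simp [noCrit]
        have hsk : ∀ s, skelSahl ε s Form.bot := fun s => by simp [skelSahl]
        exact ⟨(substProp_preserves ε p .bot hn hsk α true).2 h0.1,
               (substProp_preserves ε p .bot hn hsk β false).2 h0.2⟩
      · exact hS _ (Finset.mem_insert_of_mem hI)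
  | @elimTop p α β S' hβ hα =>
      intro I hI
      rcases Finset.mem_insert.mp hI with rfl | hI
      · have h0 := hS _ (Finset.mem_insert_self (β, α) S')
        have hn : ∀ s, noCrit ε s Form.top := fun s => by simp [noCrit]
        have hsk : ∀ s, skelSahl ε s Form.top := fun s => by simp [skelSahl]
        exact ⟨(substProp_preserves ε p .top hn hsk β true).2 h0.1,
               (substProp_preserves ε p .top hn hsk α false).2 h0.2⟩
      · exact hS _ (Finset.mem_insert_of_mem hI)
/-- exhaustive application of the Stage 1 rules of
`ALBA↓_Restricted` to an ε-skeletal Sahlqvist inequality `φ ≤ ψ` yields only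
definite ε-skeletal Sahlqvist inequalities. -/
theorem preprocess_definite (ε : ℕ → Bool) (φ ψ : Form)
    (hsahl : SkelSahlIneq ε φ ψ)
    (P : Finset Ineq)
    (hreach : Relation.ReflTransGen Stage1 {((φ, ψ) : Ineq)} P)
    (hexh : ∀ T, Stage1 P T → T = P) :
    ∀ I ∈ P, defSkelSahl ε true I.1 ∧ defSkelSahl ε false I.2 := by
  -- the invariant along the reduction
  have inv : ∀ I ∈ P, skelSahl ε true I.1 ∧ skelSahl ε false I.2 := by
    have H : ∀ {T : Finset Ineq}, Relation.ReflTransGen Stage1 {((φ, ψ) : Ineq)} T →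
        ∀ I ∈ T, skelSahl ε true I.1 ∧ skelSahl ε false I.2 := by
      intro T h
      induction h with
      | refl =>
          intro I hI
          rcases Finset.mem_singleton.mp hI with rfl
          exact hsahl
      | tail _ hstep ih => exact stage1_inv ε hstep ih
    exact H hreach
  -- exhaustion: left sides have no positive distribution redex
  have hNFL : ∀ I ∈ P, ∀ χ', ¬ Dist true I.1 χ' := by
    rintro ⟨α, β⟩ hI χ' hd
    have hst : Stage1 P (insert ((χ', β) : Ineq) (P.erase (α, β))) := by
      have := Stage1.distL (S := P.erase ((α, β) : Ineq)) (ψ := β) hd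
      rwa [Finset.insert_erase hI] at this
    have hT := hexh _ hst
    have hmem : ((α, β) : Ineq) ∈ insert ((χ', β) : Ineq) (P.erase (α, β)) := by rw [hT]; exact hI
    rcases Finset.mem_insert.mp hmem with h | h
    · exact dist_ne hd (congrArg Prod.fst h)
    · exact Finset.notMem_erase _ _ h
  have hNFR : ∀ I ∈ P, ∀ χ', ¬ Dist false I.2 χ' := by
    rintro ⟨α, β⟩ hI χ' hd
    have hst : Stage1 P (insert ((α, χ') : Ineq) (P.erase (α, β))) := by
      have := Stage1.distR (S := P.erase ((α, β) : Ineq)) (φ := α) hd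
      rwa [Finset.insert_erase hI] at this
    have hT := hexh _ hst
    have hmem : ((α, β) : Ineq) ∈ insert ((α, χ') : Ineq) (P.erase (α, β)) := by rw [hT]; exact hI
    rcases Finset.mem_insert.mp hmem with h | h
    · exact dist_ne hd (congrArg Prod.snd h)
    · exact Finset.notMem_erase _ _ h
  -- exhaustion: no top-level ∨ on the left, no top-level ∧ on the right
  have hOr : ∀ I ∈ P, ∀ a b, I.1 ≠ Form.or a b := by
    rintro ⟨α, β⟩ hI a b rfl
    have hst : Stage1 P (insert ((a, β) : Ineq) (insert ((b, β) : Ineq)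
        (P.erase (Form.or a b, β)))) := by
      have := Stage1.splitOr (S := P.erase ((Form.or a b, β) : Ineq)) (α := a) (β := b) (γ := β)
      rwa [Finset.insert_erase hI] at this
    have hT := hexh _ hst
    have hmem : ((Form.or a b, β) : Ineq) ∈ insert ((a, β) : Ineq)
        (insert ((b, β) : Ineq) (P.erase (Form.or a b, β))) := by rw [hT]; exact hI
    rcases Finset.mem_insert.mp hmem with h | h
    · exact or_ne_left a b (congrArg Prod.fst h)
    rcases Finset.mem_insert.mp h with h | h
    · exact or_ne_right a b (congrArg Prod.fst h)
    · exact Finset.notMem_erase _ _ h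
  have hAnd : ∀ I ∈ P, ∀ a b, I.2 ≠ Form.and a b := by
    rintro ⟨α, β⟩ hI a b rfl
    have hst : Stage1 P (insert ((α, a) : Ineq) (insert ((α, b) : Ineq)
        (P.erase (α, Form.and a b)))) := by
      have := Stage1.splitAnd (S := P.erase ((α, Form.and a b) : Ineq)) (α := α) (β := a) (γ := b)
      rwa [Finset.insert_erase hI] at this
    have hT := hexh _ hst
    have hmem : ((α, Form.and a b) : Ineq) ∈ insert ((α, a) : Ineq)
        (insert ((α, b) : Ineq) (P.erase (α, Form.and a b))) := by rw [hT]; exact hI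
    rcases Finset.mem_insert.mp hmem with h | h
    · exact and_ne_left a b (congrArg Prod.snd h)
    rcases Finset.mem_insert.mp h with h | h
    · exact and_ne_right a b (congrArg Prod.snd h)
    · exact Finset.notMem_erase _ _ h
  intro I hI
  refine ⟨skelSahl_def_of_nf ε I.1 true (inv I hI).1 (hNFL I hI)
      (fun _ => hOr I hI) (by simp), ?_⟩
  exact skelSahl_def_of_nf ε I.2 false (inv I hI).2 (hNFR I hI)
      (by simp) (fun _ => hAnd I hI)

end Hybrid
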